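/- arXiv:2508.11041 — 2 statements merged into one kernel-verified Lean document; each statement's English description precedes it below -/
import Mathlib

section
/- Let A be a bounded open subset of ℝ and let f_k, f ∈ L¹(A) be non-negative functions such that ∫_A f_k dx → ∫_A f dx and f(x) = liminf_{k→∞} f_k(x) for a.e. x ∈ A. Then f_k → f in L¹(A). -/
/-!
Write `|f_k - g| = (f_k - g) + 2 (f_k - g)⁻`. The integrals of the first term tend to `0` by
hypothesis. For the second, `f_k ≥ 0` gives the integrable majorant `(f_k - g)⁻ ≤ |g|`, and
`g ≤ liminf f_k` gives `(f_k - g)⁻ → 0` pointwise, so dominated convergence applies.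
-/

open MeasureTheory Filter Topology

lemma abs_eq_self_add_two_mul_negPart (a : ℝ) : |a| = a + 2 * a⁻ := by
  linarith [posPart_add_negPart a, posPart_sub_negPart a]

lemma negPart_sub_le_abs {a b : ℝ} (ha : 0 ≤ a) : (a - b)⁻ ≤ |b| := by
  rw [negPart_def]
  exact sup_le (by linarith [le_abs_self b]) (abs_nonneg b)

lemma tendsto_negPart_sub_of_le_liminf {ι : Type*} {l : Filter ι} {u : ι → ℝ} {c : ℝ}
    (hu : IsBoundedUnder (· ≥ ·) l u) (hc : c ≤ liminf u l) :
    Tendsto (fun k => (u k - c)⁻) l (𝓝 0) := by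
  refine tendsto_order.2 ⟨fun a ha => .of_forall fun k => ha.trans_le (negPart_nonneg _),
    fun b hb => ?_⟩
  filter_upwards [eventually_lt_of_lt_liminf ((sub_lt_self c hb).trans_le hc) hu] with k hk
  rw [negPart_lt]
  exact ⟨by linarith, hb⟩

theorem tendsto_integral_abs_sub_of_le_liminf {α : Type*} [MeasurableSpace α] {μ : Measure α}
    {f : ℕ → α → ℝ} {g : α → ℝ} (hf : ∀ k, Integrable (f k) μ) (hg : Integrable g μ)
    (hf_nonneg : ∀ k, 0 ≤ᵐ[μ] f k)
    (h_int : Tendsto (fun k => ∫ x, f k x ∂μ) atTop (𝓝 (∫ x, g x ∂μ)))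
    (h_liminf : ∀ᵐ x ∂μ, g x ≤ liminf (fun k => f k x) atTop) :
    Tendsto (fun k => ∫ x, |f k x - g x| ∂μ) atTop (𝓝 0) := by
  have h_negPart_int : ∀ k, Integrable (fun x => (f k x - g x)⁻) μ :=
    fun k => ((hf k).sub hg).neg_part
  have h_diff : Tendsto (fun k => ∫ x, (f k x - g x) ∂μ) atTop (𝓝 0) := by
    simpa only [integral_sub (hf _) hg, sub_self] using h_int.sub_const (∫ x, g x ∂μ)
  have h_negPart : Tendsto (fun k => ∫ x, (f k x - g x)⁻ ∂μ) atTop (𝓝 0) := by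
    have h_bound : ∀ k, ∀ᵐ x ∂μ, ‖(f k x - g x)⁻‖ ≤ |g x| := fun k => by
      filter_upwards [hf_nonneg k] with x hx
      rw [Real.norm_of_nonneg (negPart_nonneg _)]
      exact negPart_sub_le_abs hx
    have h_lim : ∀ᵐ x ∂μ, Tendsto (fun k => (f k x - g x)⁻) atTop (𝓝 0) := by
      filter_upwards [ae_all_iff.2 hf_nonneg, h_liminf] with x hx hgx
      exact tendsto_negPart_sub_of_le_liminf (isBoundedUnder_of ⟨0, hx⟩) hgx
    simpa using tendsto_integral_of_dominated_convergence _
      (fun k => (h_negPart_int k).aestronglyMeasurable) hg.abs h_bound h_lim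
  have h_split : ∀ k, ∫ x, |f k x - g x| ∂μ
      = ∫ x, (f k x - g x) ∂μ + 2 * ∫ x, (f k x - g x)⁻ ∂μ := fun k => by
    simp only [abs_eq_self_add_two_mul_negPart]
    rw [integral_add (f := fun x => f k x - g x) ((hf k).sub hg) ((h_negPart_int k).const_mul 2),
      integral_const_mul]
  simpa only [h_split, mul_zero, add_zero] using h_diff.add (h_negPart.const_mul 2)

theorem stmt0_general (A : Set ℝ)
    (f : ℕ → ℝ → ℝ) (g : ℝ → ℝ)
    (hfint : ∀ k, IntegrableOn (f k) A) (hgint : IntegrableOn g A)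
    (hfnn : ∀ k, ∀ᵐ x ∂(volume.restrict A), 0 ≤ f k x)
    (hconv : Tendsto (fun k => ∫ x in A, f k x) atTop (𝓝 (∫ x in A, g x)))
    (hliminf : ∀ᵐ x ∂(volume.restrict A), g x = liminf (fun k => f k x) atTop) :
    Tendsto (fun k => ∫ x in A, |f k x - g x|) atTop (𝓝 0) :=
  tendsto_integral_abs_sub_of_le_liminf hfint hgint hfnn hconv (hliminf.mono fun _ hx => hx.le)

/-- Lemma `Fatou=`. Let `A ⊂ ℝ` be a bounded open set and let
`f_k, f ∈ L¹(A)` be non-negative functions such that `∫_A f_k → ∫_A f` and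
`f(x) = liminf_k f_k(x)` for a.e. `x ∈ A`. Then `f_k → f` in `L¹(A)`. -/
theorem stmt0 (A : Set ℝ) (hAopen : IsOpen A) (hAbd : Bornology.IsBounded A)
    (f : ℕ → ℝ → ℝ) (g : ℝ → ℝ)
    (hfint : ∀ k, IntegrableOn (f k) A) (hgint : IntegrableOn g A)
    (hfnn : ∀ k, ∀ᵐ x ∂(volume.restrict A), 0 ≤ f k x)
    (hgnn : ∀ᵐ x ∂(volume.restrict A), 0 ≤ g x)
    (hconv : Tendsto (fun k => ∫ x in A, f k x) atTop (𝓝 (∫ x in A, g x)))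
    (hliminf : ∀ᵐ x ∂(volume.restrict A), g x = liminf (fun k => f k x) atTop) :
    Tendsto (fun k => ∫ x in A, |f k x - g x|) atTop (𝓝 0) :=
  stmt0_general A f g hfint hgint hfnn hconv hliminf
end

section
/- Let A ⊂ ℝ² be open and bounded and let h ≥ 1. Suppose V_k, V ∈ L¹(A;ℝ^h), V_k ⇀ V weakly-* in L¹(A;ℝ^h), and ∫_A √(1+|V_k|²) dx → ∫_A √(1+|V|²) dx. Then V_k → V strongly in L¹(A;ℝ^h). -/
open MeasureTheory Filter Topology Set
open scoped RealInnerProductSpace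

/-!
The area integrand `f v = √(1 + ‖v‖²)` is strictly convex and its gradient `v / f v` is bounded
by `1`. Testing the weak-* convergence against `∇f(W)` and using the convergence of the areas
shows that the Bregman divergence `D(V_k, W) = f(V_k) - f(W) - ⟪V_k - W, ∇f(W)⟫ ≥ 0` tends to `0`
in `L¹`. Pointwise `‖a - b‖² = (f a - f b)² + 2 f(b) D(a, b)`, so it remains to show
`f(V_k) → f(W)` in `L¹`. As `∫ f(V_k) → ∫ f(W)`, only the positive part `(f(W) - f(V_k))⁺`
matters; where `f(W) ≤ 2M` strong convexity bounds it by `ε + C(ε, M) D(V_k, W)`, and elsewhere by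
the tail `2 (f(W) - M)⁺`, whose integral is small for large `M`.
-/

theorem tendsto_zero_of_forall_le_add {ι : Type*} {l : Filter ι} {a : ι → ℝ}
    (h0 : ∀ i, 0 ≤ a i)
    (h : ∀ η > 0, ∃ b : ι → ℝ, Tendsto b l (𝓝 0) ∧ ∀ i, a i ≤ η + b i) :
    Tendsto a l (𝓝 0) := by
  refine tendsto_order.2 ⟨fun c hc => Eventually.of_forall fun i => hc.trans_le (h0 i),
    fun c hc => ?_⟩
  obtain ⟨b, hb, hab⟩ := h (c / 2) (half_pos hc)
  filter_upwards [hb.eventually_lt_const (half_pos hc)] with i hi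
  linarith [hab i]

theorem MeasureTheory.Integrable.tendsto_integral_max_sub_natCast {α : Type*}
    [MeasurableSpace α] {μ : Measure α} {f : α → ℝ} (hf : Integrable f μ) :
    Tendsto (fun M : ℕ => ∫ x, max (f x - M) 0 ∂μ) atTop (𝓝 0) := by
  have hlim : ∀ x, Tendsto (fun M : ℕ => max (f x - M) 0) atTop (𝓝 0) := fun x =>
    tendsto_const_nhds.congr' <| (eventually_ge_atTop ⌈f x⌉₊).mono fun M hM =>
      (max_eq_right (sub_nonpos.2 (Nat.ceil_le.1 hM))).symm
  simpa using tendsto_integral_of_dominated_convergence (F := fun (M : ℕ) x => max (f x - M) 0)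
    (fun x => ‖f x‖)
    (fun _ => (hf.1.sub aestronglyMeasurable_const).sup aestronglyMeasurable_const) hf.norm
    (fun M => ae_of_all _ fun x => by
      rw [Real.norm_of_nonneg (le_max_right _ _), Real.norm_eq_abs]
      exact max_le (by linarith [le_abs_self (f x), (M.cast_nonneg : (0 : ℝ) ≤ M)])
        (abs_nonneg _))
    (ae_of_all _ hlim)

variable {E : Type*} [NormedAddCommGroup E]

noncomputable def areaIntegrand (v : E) : ℝ := √(1 + ‖v‖ ^ 2)

theorem areaIntegrand_sq (v : E) : areaIntegrand v ^ 2 = 1 + ‖v‖ ^ 2 :=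
  Real.sq_sqrt (by positivity)

theorem one_le_areaIntegrand (v : E) : 1 ≤ areaIntegrand v :=
  Real.one_le_sqrt.2 (by simp)

theorem areaIntegrand_pos (v : E) : 0 < areaIntegrand v :=
  one_pos.trans_le (one_le_areaIntegrand v)

theorem norm_le_areaIntegrand (v : E) : ‖v‖ ≤ areaIntegrand v :=
  Real.le_sqrt_of_sq_le (by linarith)

theorem areaIntegrand_le_one_add_norm (v : E) : areaIntegrand v ≤ 1 + ‖v‖ :=
  Real.sqrt_le_iff.2 ⟨by positivity, by nlinarith [norm_nonneg v]⟩

theorem continuous_areaIntegrand : Continuous (areaIntegrand : E → ℝ) := by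
  unfold areaIntegrand; fun_prop

theorem integrable_areaIntegrand_comp {α : Type*} [MeasurableSpace α] {μ : Measure α}
    [IsFiniteMeasure μ] {u : α → E} (hu : Integrable u μ) :
    Integrable (fun x => areaIntegrand (u x)) μ :=
  ((integrable_const 1).add hu.norm).mono'
    (continuous_areaIntegrand.comp_aestronglyMeasurable hu.1)
    (ae_of_all _ fun x => by
      rw [Real.norm_of_nonneg (areaIntegrand_pos (u x)).le]
      exact areaIntegrand_le_one_add_norm (u x))

variable [InnerProductSpace ℝ E]

noncomputable def areaGradient (v : E) : E := (areaIntegrand v)⁻¹ • v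

noncomputable def areaBregman (a b : E) : ℝ :=
  areaIntegrand a - areaIntegrand b - ⟪a - b, areaGradient b⟫

theorem continuous_areaGradient : Continuous (areaGradient : E → E) :=
  (continuous_areaIntegrand.inv₀ fun v => (areaIntegrand_pos v).ne').smul continuous_id

theorem norm_areaGradient_le_one (v : E) : ‖areaGradient v‖ ≤ 1 := by
  have h := one_le_areaIntegrand v
  rw [areaGradient, norm_smul, norm_inv, Real.norm_of_nonneg (by linarith),
    inv_mul_le_one₀ (by linarith)]
  exact norm_le_areaIntegrand v

theorem inner_add_one_le_areaIntegrand_mul (a b : E) :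
    ⟪a, b⟫ + 1 ≤ areaIntegrand a * areaIntegrand b := by
  have hab : 1 + ‖a‖ * ‖b‖ ≤ areaIntegrand a * areaIntegrand b := by
    rw [areaIntegrand, areaIntegrand, ← Real.sqrt_mul (by positivity)]
    exact Real.le_sqrt_of_sq_le (by nlinarith [sq_nonneg (‖a‖ - ‖b‖)])
  linarith [real_inner_le_norm a b]

theorem areaIntegrand_mul_areaBregman (a b : E) :
    areaIntegrand b * areaBregman a b = areaIntegrand a * areaIntegrand b - 1 - ⟪a, b⟫ := by
  have hne := (areaIntegrand_pos b).ne'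
  have hsq := areaIntegrand_sq b
  rw [areaBregman, areaGradient, real_inner_smul_right, inner_sub_left,
    real_inner_self_eq_norm_sq]
  field_simp
  linear_combination (-1 : ℝ) * hsq

theorem areaBregman_nonneg (a b : E) : 0 ≤ areaBregman a b := by
  have h := areaIntegrand_mul_areaBregman a b
  have := inner_add_one_le_areaIntegrand_mul a b
  exact (mul_nonneg_iff_of_pos_left (areaIntegrand_pos b)).1 (by linarith)

theorem norm_sub_sq_eq (a b : E) :
    ‖a - b‖ ^ 2 = (areaIntegrand a - areaIntegrand b) ^ 2
      + 2 * areaIntegrand b * areaBregman a b := by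
  rw [mul_assoc, areaIntegrand_mul_areaBregman, norm_sub_sq_real]
  linear_combination (-1 : ℝ) * areaIntegrand_sq a - areaIntegrand_sq b

/- With `s, t` the area integrands of `a, b`: `(s - t) (s + t) = ⟪a - b, a + b⟫`, so by
Cauchy–Schwarz `(s - t)² (s + t)² ≤ ‖a - b‖² ‖a + b‖²`, while `(s + t)² - ‖a + b‖² = 4 + 2 t D`. -/
theorem two_mul_norm_sub_sq_le (a b : E) :
    2 * ‖a - b‖ ^ 2 ≤ areaIntegrand b * areaBregman a b
      * (areaIntegrand a + areaIntegrand b) ^ 2 := by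
  set s := areaIntegrand a
  set t := areaIntegrand b
  set P := t * areaBregman a b
  have hP : 0 ≤ P := mul_nonneg (areaIntegrand_pos b).le (areaBregman_nonneg a b)
  have hx : ‖a - b‖ ^ 2 = (s - t) ^ 2 + 2 * P := by rw [norm_sub_sq_eq]; ring
  have hS : (s + t) ^ 2 = ‖a + b‖ ^ 2 + 4 + 2 * P := by
    rw [norm_add_sq_real]
    linear_combination areaIntegrand_sq a + areaIntegrand_sq b
      - 2 * areaIntegrand_mul_areaBregman a b
  have hdiff : (s - t) * (s + t) = ⟪a - b, a + b⟫ := by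
    rw [inner_sub_left, inner_add_right, inner_add_right, real_inner_self_eq_norm_sq,
      real_inner_self_eq_norm_sq, real_inner_comm a b]
    linear_combination areaIntegrand_sq a - areaIntegrand_sq b
  have hcs : ((s - t) * (s + t)) ^ 2 ≤ ‖a - b‖ ^ 2 * ‖a + b‖ ^ 2 := by
    rw [hdiff, ← mul_pow]
    exact sq_le_sq' (neg_le_of_abs_le (abs_real_inner_le_norm _ _)) (real_inner_le_norm _ _)
  nlinarith [mul_nonneg (sq_nonneg ‖a - b‖) hP]

theorem norm_sub_sq_le_of_areaIntegrand_le {a b : E} (h : areaIntegrand a ≤ areaIntegrand b) :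
    ‖a - b‖ ^ 2 ≤ 2 * areaIntegrand b ^ 3 * areaBregman a b := by
  have hconv := two_mul_norm_sub_sq_le a b
  have hsum : (areaIntegrand a + areaIntegrand b) ^ 2 ≤ (2 * areaIntegrand b) ^ 2 :=
    pow_le_pow_left₀ (by linarith [areaIntegrand_pos a]) (by linarith) 2
  nlinarith [mul_nonneg (areaIntegrand_pos b).le (areaBregman_nonneg a b)]

theorem norm_sub_le_abs_sub_add {δ : ℝ} (hδ : 0 < δ) (a b : E) :
    ‖a - b‖ ≤ |areaIntegrand a - areaIntegrand b| + δ * areaIntegrand b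
      + areaBregman a b / (2 * δ) := by
  set t := areaIntegrand b
  set D := areaBregman a b
  have hR : 0 ≤ δ * t + D / (2 * δ) := by
    have := areaIntegrand_pos b; have := areaBregman_nonneg a b; positivity
  have hamgm : 2 * t * D ≤ (δ * t + D / (2 * δ)) ^ 2 := by
    have h : (δ * t) * (D / (2 * δ)) = t * D / 2 := by field_simp
    nlinarith [sq_nonneg (δ * t - D / (2 * δ))]
  rw [add_assoc, ← pow_le_pow_iff_left₀ (norm_nonneg _) (by positivity) two_ne_zero,
    norm_sub_sq_eq, ← sq_abs (areaIntegrand a - areaIntegrand b)]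
  nlinarith [abs_nonneg (areaIntegrand a - areaIntegrand b)]

theorem areaIntegrand_sub_le {ε M : ℝ} (hε : 0 < ε) (hM : 0 ≤ M) (a b : E) :
    areaIntegrand b - areaIntegrand a
      ≤ ε + 4 * M ^ 3 / ε * areaBregman a b + 2 * max (areaIntegrand b - M) 0 := by
  set s := areaIntegrand a
  set t := areaIntegrand b
  set D := areaBregman a b
  have hD := areaBregman_nonneg a b
  have hC : 0 ≤ 4 * M ^ 3 / ε * D := by positivity
  have htail : 0 ≤ max (t - M) 0 := le_max_right _ _
  rcases le_total t s with hts | hst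
  · linarith
  rcases le_total (2 * M) t with hMt | htM
  · linarith [le_max_left (t - M) 0, areaIntegrand_pos a]
  have hsq : (t - s) ^ 2 ≤ 16 * M ^ 3 * D := by
    have h1 : (s - t) ^ 2 ≤ ‖a - b‖ ^ 2 := by
      rw [norm_sub_sq_eq]; nlinarith [areaIntegrand_pos b]
    have h2 : t ^ 3 ≤ (2 * M) ^ 3 := pow_le_pow_left₀ (areaIntegrand_pos b).le htM 3
    nlinarith [norm_sub_sq_le_of_areaIntegrand_le hst]
  have hamgm : 16 * M ^ 3 * D ≤ (ε + 4 * M ^ 3 / ε * D) ^ 2 := by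
    have h : ε * (4 * M ^ 3 / ε * D) = 4 * M ^ 3 * D := by field_simp
    nlinarith [sq_nonneg (ε - 4 * M ^ 3 / ε * D)]
  have := (pow_le_pow_iff_left₀ (by linarith) (by positivity) two_ne_zero).1 (hsq.trans hamgm)
  linarith

section Integral

variable {α : Type*} [MeasurableSpace α] {μ : Measure α}

theorem integrable_inner_areaGradient_comp {u w : α → E} (hu : Integrable u μ)
    (hw : AEStronglyMeasurable w μ) :
    Integrable (fun x => ⟪u x, areaGradient (w x)⟫) μ :=
  hu.norm.mono' (hu.1.inner (continuous_areaGradient.comp_aestronglyMeasurable hw))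
    (ae_of_all _ fun _ => (norm_inner_le_norm _ _).trans
      (mul_le_of_le_one_right (norm_nonneg _) (norm_areaGradient_le_one _)))

theorem integral_areaBregman_comp [IsFiniteMeasure μ] {u w : α → E} (hu : Integrable u μ)
    (hw : Integrable w μ) :
    ∫ x, areaBregman (u x) (w x) ∂μ = (∫ x, areaIntegrand (u x) ∂μ - ∫ x, areaIntegrand (w x) ∂μ)
      - (∫ x, ⟪u x, areaGradient (w x)⟫ ∂μ - ∫ x, ⟪w x, areaGradient (w x)⟫ ∂μ) := by
  have hsu := integrable_areaIntegrand_comp hu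
  have hsw := integrable_areaIntegrand_comp hw
  have hgu := integrable_inner_areaGradient_comp hu hw.1
  have hgw := integrable_inner_areaGradient_comp hw hw.1
  simp_rw [areaBregman, inner_sub_left]
  rw [integral_sub, integral_sub hsu hsw, integral_sub hgu hgw]
  exacts [hsu.sub hsw, hgu.sub hgw]

theorem integrable_areaBregman_comp [IsFiniteMeasure μ] {u w : α → E} (hu : Integrable u μ)
    (hw : Integrable w μ) : Integrable (fun x => areaBregman (u x) (w x)) μ :=
  ((integrable_areaIntegrand_comp hu).sub (integrable_areaIntegrand_comp hw)).sub
    (integrable_inner_areaGradient_comp (hu.sub hw) hw.1)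

theorem tendsto_integral_areaBregman [IsFiniteMeasure μ] [MeasurableSpace E] [BorelSpace E]
    {u : ℕ → α → E} {w : α → E} (hu : ∀ k, Integrable (u k) μ) (hw : Integrable w μ)
    (hweak : ∀ g : α → E, Measurable g → (∃ C : ℝ, ∀ x, ‖g x‖ ≤ C) →
      Tendsto (fun k => ∫ x, ⟪u k x, g x⟫ ∂μ) atTop (𝓝 (∫ x, ⟪w x, g x⟫ ∂μ)))
    (harea : Tendsto (fun k => ∫ x, areaIntegrand (u k x) ∂μ) atTop
      (𝓝 (∫ x, areaIntegrand (w x) ∂μ))) :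
    Tendsto (fun k => ∫ x, areaBregman (u k x) (w x) ∂μ) atTop (𝓝 0) := by
  obtain ⟨w', hw'_meas, hww'⟩ := hw.1
  have hg : Measurable fun x => areaGradient (w' x) :=
    continuous_areaGradient.measurable.comp hw'_meas.measurable
  have hw' (v : α → E) :
      ∫ x, ⟪v x, areaGradient (w x)⟫ ∂μ = ∫ x, ⟪v x, areaGradient (w' x)⟫ ∂μ :=
    integral_congr_ae (hww'.mono fun x hx => by simp only [hx])
  have hlim := (harea.sub_const (∫ x, areaIntegrand (w x) ∂μ)).sub
    ((hweak _ hg ⟨1, fun x => norm_areaGradient_le_one _⟩).sub_const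
      (∫ x, ⟪w x, areaGradient (w' x)⟫ ∂μ))
  simp_rw [integral_areaBregman_comp (hu _) hw, hw']
  simpa only [sub_self] using hlim

theorem tendsto_integral_max_areaIntegrand_sub [IsFiniteMeasure μ] {u : ℕ → α → E} {w : α → E}
    (hu : ∀ k, Integrable (u k) μ) (hw : Integrable w μ)
    (hD : Tendsto (fun k => ∫ x, areaBregman (u k x) (w x) ∂μ) atTop (𝓝 0)) :
    Tendsto (fun k => ∫ x, max (areaIntegrand (w x) - areaIntegrand (u k x)) 0 ∂μ) atTop
      (𝓝 0) := by
  have ht := integrable_areaIntegrand_comp hw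
  refine tendsto_zero_of_forall_le_add (fun k => integral_nonneg fun x => le_max_right _ _)
    fun η hη => ?_
  obtain ⟨M, hM⟩ := (ht.tendsto_integral_max_sub_natCast.eventually_lt_const
    (by positivity : 0 < η / 4)).exists
  obtain ⟨ε, hε, hεμ⟩ := exists_pos_mul_lt (half_pos hη) (μ.real univ)
  set C := 4 * (M : ℝ) ^ 3 / ε
  refine ⟨fun k => C * ∫ x, areaBregman (u k x) (w x) ∂μ, by simpa using hD.const_mul C,
    fun k => ?_⟩
  have hDk := integrable_areaBregman_comp (hu k) hw
  have htail : Integrable (fun x => max (areaIntegrand (w x) - M) 0) μ :=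
    (ht.sub (integrable_const (M : ℝ))).pos_part
  have hlin : Integrable (fun x => ε + C * areaBregman (u k x) (w x)) μ :=
    (integrable_const ε).add (hDk.const_mul C)
  calc ∫ x, max (areaIntegrand (w x) - areaIntegrand (u k x)) 0 ∂μ
      ≤ ∫ x, (ε + C * areaBregman (u k x) (w x)
          + 2 * max (areaIntegrand (w x) - M) 0) ∂μ := by
        refine integral_mono (ht.sub (integrable_areaIntegrand_comp (hu k))).pos_part
          (hlin.add (htail.const_mul 2)) fun x => ?_
        have := areaBregman_nonneg (u k x) (w x)
        exact max_le (areaIntegrand_sub_le hε M.cast_nonneg _ _) (by positivity)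
    _ = μ.real univ * ε + C * ∫ x, areaBregman (u k x) (w x) ∂μ
          + 2 * ∫ x, max (areaIntegrand (w x) - M) 0 ∂μ := by
        rw [integral_add hlin (htail.const_mul 2),
          integral_add (integrable_const ε) (hDk.const_mul C), integral_const, integral_const_mul,
          integral_const_mul, smul_eq_mul]
    _ ≤ η + C * ∫ x, areaBregman (u k x) (w x) ∂μ := by linarith

theorem tendsto_integral_abs_areaIntegrand_sub [IsFiniteMeasure μ] {u : ℕ → α → E} {w : α → E}
    (hu : ∀ k, Integrable (u k) μ) (hw : Integrable w μ)
    (harea : Tendsto (fun k => ∫ x, areaIntegrand (u k x) ∂μ) atTop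
      (𝓝 (∫ x, areaIntegrand (w x) ∂μ)))
    (hD : Tendsto (fun k => ∫ x, areaBregman (u k x) (w x) ∂μ) atTop (𝓝 0)) :
    Tendsto (fun k => ∫ x, |areaIntegrand (u k x) - areaIntegrand (w x)| ∂μ) atTop (𝓝 0) := by
  have ht := integrable_areaIntegrand_comp hw
  have hsplit (k : ℕ) : ∫ x, |areaIntegrand (u k x) - areaIntegrand (w x)| ∂μ
      = (∫ x, areaIntegrand (u k x) ∂μ - ∫ x, areaIntegrand (w x) ∂μ)
        + 2 * ∫ x, max (areaIntegrand (w x) - areaIntegrand (u k x)) 0 ∂μ := by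
    have hs := integrable_areaIntegrand_comp (hu k)
    have hmax : Integrable (fun x => max (areaIntegrand (w x) - areaIntegrand (u k x)) 0) μ :=
      (ht.sub hs).pos_part
    have habs (x : α) : |areaIntegrand (u k x) - areaIntegrand (w x)|
        = (areaIntegrand (u k x) - areaIntegrand (w x))
          + 2 * max (areaIntegrand (w x) - areaIntegrand (u k x)) 0 := by
      rcases le_total (areaIntegrand (u k x)) (areaIntegrand (w x)) with h | h
      · rw [abs_of_nonpos (sub_nonpos.2 h), max_eq_left (sub_nonneg.2 h)]; ring
      · rw [abs_of_nonneg (sub_nonneg.2 h), max_eq_right (sub_nonpos.2 h)]; ring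
    simp_rw [habs]
    rw [integral_add (hs.sub' ht) (hmax.const_mul 2), integral_sub hs ht,
      integral_const_mul]
  simp_rw [hsplit]
  simpa using (harea.sub_const (∫ x, areaIntegrand (w x) ∂μ)).add
    ((tendsto_integral_max_areaIntegrand_sub hu hw hD).const_mul 2)

theorem tendsto_integral_norm_sub_of_areaBregman [IsFiniteMeasure μ] {u : ℕ → α → E}
    {w : α → E} (hu : ∀ k, Integrable (u k) μ) (hw : Integrable w μ)
    (harea : Tendsto (fun k => ∫ x, areaIntegrand (u k x) ∂μ) atTop
      (𝓝 (∫ x, areaIntegrand (w x) ∂μ)))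
    (hD : Tendsto (fun k => ∫ x, areaBregman (u k x) (w x) ∂μ) atTop (𝓝 0)) :
    Tendsto (fun k => ∫ x, ‖u k x - w x‖ ∂μ) atTop (𝓝 0) := by
  have ht := integrable_areaIntegrand_comp hw
  refine tendsto_zero_of_forall_le_add (fun k => integral_nonneg fun x => norm_nonneg _)
    fun η hη => ?_
  obtain ⟨δ, hδ, hδt⟩ := exists_pos_mul_lt hη (∫ x, areaIntegrand (w x) ∂μ)
  have hb := (tendsto_integral_abs_areaIntegrand_sub hu hw harea hD).add (hD.div_const (2 * δ))
  rw [zero_div, add_zero] at hb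
  refine ⟨_, hb, fun k => ?_⟩
  have habs := ((integrable_areaIntegrand_comp (hu k)).sub' ht).abs
  have hDk := (integrable_areaBregman_comp (hu k) hw).div_const (2 * δ)
  have hlin : Integrable (fun x => |areaIntegrand (u k x) - areaIntegrand (w x)|
      + δ * areaIntegrand (w x)) μ := habs.add (ht.const_mul δ)
  calc ∫ x, ‖u k x - w x‖ ∂μ
      ≤ ∫ x, (|areaIntegrand (u k x) - areaIntegrand (w x)| + δ * areaIntegrand (w x)
          + areaBregman (u k x) (w x) / (2 * δ)) ∂μ :=
        integral_mono ((hu k).sub hw).norm (hlin.add hDk) fun x =>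
          norm_sub_le_abs_sub_add hδ (u k x) (w x)
    _ = ∫ x, |areaIntegrand (u k x) - areaIntegrand (w x)| ∂μ
          + δ * ∫ x, areaIntegrand (w x) ∂μ
          + (∫ x, areaBregman (u k x) (w x) ∂μ) / (2 * δ) := by
        rw [integral_add hlin hDk, integral_add habs (ht.const_mul δ), integral_const_mul,
          integral_div]
    _ ≤ η + (∫ x, |areaIntegrand (u k x) - areaIntegrand (w x)| ∂μ
          + (∫ x, areaBregman (u k x) (w x) ∂μ) / (2 * δ)) := by linarith

end Integral

theorem stmt14_general (A : Set (ℝ × ℝ)) (hAbd : Bornology.IsBounded A)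
    (h : ℕ)
    (V : ℕ → ℝ × ℝ → EuclideanSpace ℝ (Fin h))
    (W : ℝ × ℝ → EuclideanSpace ℝ (Fin h))
    (hVint : ∀ k, IntegrableOn (V k) A) (hWint : IntegrableOn W A)
    (hweak : ∀ g : ℝ × ℝ → EuclideanSpace ℝ (Fin h),
      Measurable g → (∃ C : ℝ, ∀ x, ‖g x‖ ≤ C) →
      Tendsto (fun k => ∫ x in A, ⟪V k x, g x⟫) atTop (𝓝 (∫ x in A, ⟪W x, g x⟫)))
    (harea : Tendsto (fun k => ∫ x in A, Real.sqrt (1 + ‖V k x‖ ^ 2)) atTop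
      (𝓝 (∫ x in A, Real.sqrt (1 + ‖W x‖ ^ 2)))) :
    Tendsto (fun k => ∫ x in A, ‖V k x - W x‖) atTop (𝓝 0) := by
  have : IsFiniteMeasure (volume.restrict A) :=
    isFiniteMeasure_restrict.2 hAbd.measure_lt_top.ne
  exact tendsto_integral_norm_sub_of_areaBregman hVint hWint harea
    (tendsto_integral_areaBregman hVint hWint hweak harea)

/-- Let `A ⊂ ℝ²` be open and bounded and `h ≥ 1`. If
`V_k, V ∈ L¹(A;ℝ^h)`, `V_k ⇀ V` weakly-* in `L¹` (i.e. tested against bounded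
measurable functions) and `∫_A √(1+|V_k|²) → ∫_A √(1+|V|²)`, then `V_k → V`
strongly in `L¹(A;ℝ^h)`. -/
theorem stmt14 (A : Set (ℝ × ℝ)) (hAopen : IsOpen A) (hAbd : Bornology.IsBounded A)
    (h : ℕ) (hh : 1 ≤ h)
    (V : ℕ → ℝ × ℝ → EuclideanSpace ℝ (Fin h))
    (W : ℝ × ℝ → EuclideanSpace ℝ (Fin h))
    (hVint : ∀ k, IntegrableOn (V k) A) (hWint : IntegrableOn W A)
    (hweak : ∀ g : ℝ × ℝ → EuclideanSpace ℝ (Fin h),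
      Measurable g → (∃ C : ℝ, ∀ x, ‖g x‖ ≤ C) →
      Tendsto (fun k => ∫ x in A, ⟪V k x, g x⟫) atTop (𝓝 (∫ x in A, ⟪W x, g x⟫)))
    (harea : Tendsto (fun k => ∫ x in A, Real.sqrt (1 + ‖V k x‖ ^ 2)) atTop
      (𝓝 (∫ x in A, Real.sqrt (1 + ‖W x‖ ^ 2)))) :
    Tendsto (fun k => ∫ x in A, ‖V k x - W x‖) atTop (𝓝 0) :=
  stmt14_general A hAbd h V W hVint hWint hweak harea
end
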